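/- arXiv:2505.12243 — 2 statements merged into one kernel-verified Lean document; each statement's English description precedes it below -/
import Mathlib

section
/- For all integers k, r with k ≥ r ≥ 1, P(X ≥ r) = Σ_{j=r}^{k} (-1)^{r+j} C(j-1, r-1) S_j + (-1)^{r+k+1} Σ_{i=1}^{r} C(k-i, r-i) E[C(X-i, k-i+1)]. -/
open MeasureTheory Finset
open scoped Classical

/-- Binomial coefficient for integer arguments: `C t s = 0` if `min s t < 0` or
`s > t`, and `C t s = t!/(s!(t-s)!)` otherwise. -/
def intChoose (t s : ℤ) : ℤ :=
  if 0 ≤ s ∧ s ≤ t then (t.toNat).choose s.toNat else 0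

lemma intChoose_of_not (t s : ℤ) (h : ¬(0 ≤ s ∧ s ≤ t)) : intChoose t s = 0 := by
  simp [intChoose, h]

lemma intChoose_natCast (t s : ℕ) : intChoose t s = (t.choose s : ℤ) := by
  unfold intChoose
  split
  · simp
  · rename_i h
    push_neg at h
    have : t < s := by exact_mod_cast h (by positivity)
    rw [Nat.choose_eq_zero_of_lt this]; simp

lemma intChoose_pascal (t s : ℤ) (h : 1 ≤ s ∨ (0 ≤ s ∧ 1 ≤ t)) :
    intChoose t s = intChoose (t-1) s + intChoose (t-1) (s-1) := by
  by_cases hs : 1 ≤ s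
  · by_cases hst : s ≤ t - 1
    · have h1 : (0:ℤ) ≤ s ∧ s ≤ t := ⟨by omega, by omega⟩
      have h2 : (0:ℤ) ≤ s ∧ s ≤ t - 1 := ⟨by omega, hst⟩
      have h3 : (0:ℤ) ≤ s - 1 ∧ s - 1 ≤ t - 1 := ⟨by omega, by omega⟩
      simp only [intChoose, if_pos h1, if_pos h2, if_pos h3]
      have e1 : t.toNat = (t-1).toNat + 1 := by omega
      have e2 : s.toNat = (s-1).toNat + 1 := by omega
      rw [e1, e2, Nat.choose_succ_succ']
      push_cast; ring
    · by_cases hst2 : s ≤ t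
      · have hst3 : s = t := by omega
        subst hst3
        rw [intChoose_of_not (s-1) s (by omega)]
        simp only [intChoose, if_pos (⟨by omega, le_refl s⟩ : (0:ℤ) ≤ s ∧ s ≤ s),
          if_pos (⟨by omega, le_refl (s-1)⟩ : (0:ℤ) ≤ s - 1 ∧ s - 1 ≤ s - 1)]
        simp
      · rw [intChoose_of_not t s (by omega), intChoose_of_not (t-1) s (by omega),
          intChoose_of_not (t-1) (s-1) (by omega)]
        ring
  · have ht : 1 ≤ t := by omega
    have hs2 : s = 0 := by omega
    subst hs2
    rw [intChoose_of_not (t-1) (0-1) (by omega)]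
    simp only [intChoose, if_pos (⟨le_refl 0, by omega⟩ : (0:ℤ) ≤ 0 ∧ 0 ≤ t),
      if_pos (⟨le_refl 0, by omega⟩ : (0:ℤ) ≤ 0 ∧ 0 ≤ t - 1)]
    simp

lemma telescope_base (m : ℤ) (r : ℕ) :
    ∑ i ∈ Icc 1 r, intChoose (m - i) ((r:ℤ) - i + 1)
      = intChoose m r - intChoose (m - r) 0 := by
  rw [show Icc 1 r = Ico 1 (r+1) by rw [Finset.Ico_add_one_right_eq_Icc], Finset.sum_Ico_eq_sum_range]
  simp only [show r + 1 - 1 = r from rfl]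
  calc ∑ t ∈ range r, intChoose (m - (1 + t)) ((r:ℤ) - (1 + t) + 1)
      = ∑ t ∈ range r, (intChoose (m - t) ((r:ℤ) - t) - intChoose (m - (t+1)) ((r:ℤ) - (t+1))) := by
        apply sum_congr rfl
        intro t ht
        simp only [mem_range] at ht
        have hp := intChoose_pascal (m - t) ((r:ℤ) - t) (Or.inl (by push_cast; omega))
        push_cast
        rw [show m - (1 + (t:ℤ)) = m - t - 1 by ring,
          show (r:ℤ) - (1 + (t:ℤ)) + 1 = (r:ℤ) - t by ring,
          show m - ((t:ℤ) + 1) = m - t - 1 by ring,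
          show (r:ℤ) - ((t:ℤ) + 1) = (r:ℤ) - t - 1 by ring, hp]
        ring
    _ = intChoose (m - 0) ((r:ℤ) - 0) - intChoose (m - r) ((r:ℤ) - r) :=
        sum_range_sub' (fun t => intChoose (m - t) ((r:ℤ) - t)) r
    _ = intChoose m r - intChoose (m - r) 0 := by norm_num

lemma telescope_step (m : ℤ) (k r : ℕ) (hr : 1 ≤ r) (hrk : r ≤ k) :
    ∑ i ∈ Icc 1 r,
      (intChoose ((k:ℤ) - i) ((r:ℤ) - i) * intChoose (m - i) ((k:ℤ) + 1 - i)
        + intChoose ((k:ℤ) + 1 - i) ((r:ℤ) - i) * intChoose (m - i) ((k:ℤ) + 2 - i))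
      = intChoose (k:ℤ) ((r:ℤ) - 1) * intChoose m ((k:ℤ) + 1) := by
  set g : ℕ → ℤ := fun t =>
    intChoose ((k:ℤ) - t) ((r:ℤ) - 1 - t) * intChoose (m - t) ((k:ℤ) + 1 - t) with hg
  rw [show Icc 1 r = Ico 1 (r+1) by rw [Finset.Ico_add_one_right_eq_Icc], Finset.sum_Ico_eq_sum_range]
  simp only [show r + 1 - 1 = r from rfl]
  calc ∑ t ∈ range r,
        (intChoose ((k:ℤ) - (1+t)) ((r:ℤ) - (1+t)) * intChoose (m - (1+t)) ((k:ℤ) + 1 - (1+t))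
          + intChoose ((k:ℤ) + 1 - (1+t)) ((r:ℤ) - (1+t)) * intChoose (m - (1+t)) ((k:ℤ) + 2 - (1+t)))
      = ∑ t ∈ range r, (g t - g (t+1)) := by
        apply sum_congr rfl
        intro t ht
        simp only [mem_range] at ht
        have hQ := intChoose_pascal (m - t) ((k:ℤ) + 1 - t) (Or.inl (by push_cast; omega))
        have hP := intChoose_pascal ((k:ℤ) - t) ((r:ℤ) - 1 - t)
          (Or.inr ⟨by push_cast; omega, by push_cast; omega⟩)
        simp only [hg]
        push_cast
        rw [show m - (1 + (t:ℤ)) = m - t - 1 by ring,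
          show (k:ℤ) - (1 + (t:ℤ)) = (k:ℤ) - t - 1 by ring,
          show (r:ℤ) - (1 + (t:ℤ)) = (r:ℤ) - 1 - t by ring,
          show (k:ℤ) + 1 - (1 + (t:ℤ)) = (k:ℤ) - t by ring,
          show (k:ℤ) + 2 - (1 + (t:ℤ)) = (k:ℤ) + 1 - t by ring,
          show m - ((t:ℤ) + 1) = m - t - 1 by ring,
          show (k:ℤ) - ((t:ℤ) + 1) = (k:ℤ) - t - 1 by ring,
          show (r:ℤ) - 1 - ((t:ℤ) + 1) = (r:ℤ) - 1 - t - 1 by ring,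
          show (k:ℤ) + 1 - ((t:ℤ) + 1) = (k:ℤ) - t by ring,
          hQ, hP]
        ring
    _ = g 0 - g r := sum_range_sub' g r
    _ = intChoose (k:ℤ) ((r:ℤ) - 1) * intChoose m ((k:ℤ) + 1) := by
        simp only [hg]
        rw [intChoose_of_not ((k:ℤ) - r) ((r:ℤ) - 1 - r) (by omega)]
        norm_num

lemma key (m r : ℕ) (hr : 1 ≤ r) : ∀ k, r ≤ k →
    (if r ≤ m then (1:ℤ) else 0)
      = (∑ j ∈ Icc r k, (-1:ℤ)^(r+j) * ((j-1).choose (r-1) : ℤ) * (m.choose j : ℤ))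
        + (-1:ℤ)^(r+k+1) *
            ∑ i ∈ Icc 1 r, ((k-i).choose (r-i) : ℤ) * intChoose ((m:ℤ) - i) ((k:ℤ) - i + 1) := by
  refine Nat.le_induction ?_ ?_
  · -- base case k = r
    have hb : ∑ i ∈ Icc 1 r, ((r-i).choose (r-i) : ℤ) * intChoose ((m:ℤ) - i) ((r:ℤ) - i + 1)
        = intChoose (m:ℤ) (r:ℤ) - intChoose ((m:ℤ) - r) 0 := by
      rw [← telescope_base (m:ℤ) r]
      exact sum_congr rfl fun i _ => by rw [Nat.choose_self]; ring
    rw [Icc_self, sum_singleton, hb]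
    have h1 : intChoose (m:ℤ) (r:ℤ) = (m.choose r : ℤ) := intChoose_natCast m r
    have h2 : intChoose ((m:ℤ) - r) 0 = (if r ≤ m then (1:ℤ) else 0) := by
      unfold intChoose
      by_cases h : r ≤ m
      · rw [if_pos ⟨le_refl 0, by omega⟩, if_pos h]; simp
      · rw [if_neg (by omega), if_neg h]
    have h3 : ((-1:ℤ))^(r+r) = 1 := by
      rw [show r + r = 2 * r by ring, pow_mul]; norm_num
    have h4 : ((-1:ℤ))^(r+r+1) = -1 := by rw [pow_succ, h3]; ring
    rw [h1, h2, h3, h4, Nat.choose_self]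
    ring
  · -- inductive step
    intro k hk ih
    rw [← Finset.Ico_add_one_right_eq_Icc, Finset.sum_Ico_succ_top (by omega), Finset.Ico_add_one_right_eq_Icc, ih]
    have hstep := telescope_step (m:ℤ) k r hr hk
    have hE : ∀ i ∈ Icc 1 r,
        ((k-i).choose (r-i) : ℤ) * intChoose ((m:ℤ) - i) ((k:ℤ) - i + 1)
          = intChoose ((k:ℤ) - i) ((r:ℤ) - i) * intChoose ((m:ℤ) - i) ((k:ℤ) + 1 - i) := by
      intro i hi
      simp only [mem_Icc] at hi
      have h1 : ((k-i).choose (r-i) : ℤ) = intChoose ((k:ℤ) - i) ((r:ℤ) - i) := by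
        rw [show ((k:ℤ) - i) = ((k - i : ℕ) : ℤ) by omega,
          show ((r:ℤ) - i) = ((r - i : ℕ) : ℤ) by omega, intChoose_natCast]
      rw [h1, show (k:ℤ) - i + 1 = (k:ℤ) + 1 - i by ring]
    have hE' : ∀ i ∈ Icc 1 r,
        ((k+1-i).choose (r-i) : ℤ) * intChoose ((m:ℤ) - i) (((k+1:ℕ):ℤ) - i + 1)
          = intChoose ((k:ℤ) + 1 - i) ((r:ℤ) - i) * intChoose ((m:ℤ) - i) ((k:ℤ) + 2 - i) := by
      intro i hi
      simp only [mem_Icc] at hi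
      have h1 : ((k+1-i).choose (r-i) : ℤ) = intChoose ((k:ℤ) + 1 - i) ((r:ℤ) - i) := by
        rw [show ((k:ℤ) + 1 - i) = ((k + 1 - i : ℕ) : ℤ) by omega,
          show ((r:ℤ) - i) = ((r - i : ℕ) : ℤ) by omega, intChoose_natCast]
      rw [h1, show (((k+1:ℕ):ℤ)) - i + 1 = (k:ℤ) + 2 - i by push_cast; ring]
    have hsum : ∑ i ∈ Icc 1 r, ((k-i).choose (r-i) : ℤ) * intChoose ((m:ℤ) - i) ((k:ℤ) - i + 1)
        + ∑ i ∈ Icc 1 r, ((k+1-i).choose (r-i) : ℤ) * intChoose ((m:ℤ) - i) (((k+1:ℕ):ℤ) - i + 1)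
        = intChoose (k:ℤ) ((r:ℤ) - 1) * intChoose (m:ℤ) ((k:ℤ) + 1) := by
      rw [sum_congr rfl hE, sum_congr rfl hE', ← sum_add_distrib]
      exact hstep
    have hC1 : (((k+1)-1).choose (r-1) : ℤ) = intChoose (k:ℤ) ((r:ℤ) - 1) := by
      rw [show ((r:ℤ) - 1) = ((r - 1 : ℕ) : ℤ) by omega,
        show ((k:ℤ)) = ((k+1-1 : ℕ) : ℤ) by push_cast; omega, intChoose_natCast]
    have hC2 : (m.choose (k+1) : ℤ) = intChoose (m:ℤ) ((k:ℤ) + 1) := by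
      rw [show ((k:ℤ) + 1) = ((k + 1 : ℕ) : ℤ) by push_cast; ring, intChoose_natCast]
    have hs1 : ((-1:ℤ))^(r+(k+1)) = -(-1:ℤ)^(r+k) := by
      rw [show r+(k+1) = (r+k)+1 by ring, pow_succ]; ring
    have hs2 : ((-1:ℤ))^(r+(k+1)+1) = (-1:ℤ)^(r+k) := by
      rw [show r+(k+1)+1 = (r+k)+2 by ring, pow_add]; ring
    have hs3 : ((-1:ℤ))^(r+k+1) = -(-1:ℤ)^(r+k) := by rw [pow_succ]; ring
    push_cast at hsum hC1 hC2 ⊢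
    rw [hs1, hs2, hs3, hC1, hC2]
    linear_combination (-((-1:ℤ)^(r+k))) * hsum

section
variable {Ω : Type*} [MeasurableSpace Ω] (P : Measure Ω) [IsProbabilityMeasure P]
  (n : ℕ) (A : Fin n → Set Ω)

lemma Xmeas (hA : ∀ i, MeasurableSet (A i)) : Measurable (fun ω => (Finset.univ.filter (fun l => ω ∈ A l)).card) := by
  have : (fun ω => (Finset.univ.filter (fun l => ω ∈ A l)).card)
      = fun ω => ∑ l : Fin n, if ω ∈ A l then 1 else 0 := by
    funext ω; rw [Finset.card_filter]
  rw [this]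
  exact Finset.measurable_sum univ fun l _ => Measurable.ite (hA l) measurable_const measurable_const

lemma integral_comp (hA : ∀ i, MeasurableSet (A i)) (g : ℕ → ℝ) :
    ∫ ω, g ((Finset.univ.filter (fun l => ω ∈ A l)).card) ∂P
      = ∑ c ∈ range (n+1),
          g c * (P {ω | (Finset.univ.filter (fun l => ω ∈ A l)).card = c}).toReal := by
  set X : Ω → ℕ := fun ω => (Finset.univ.filter (fun l => ω ∈ A l)).card with hX
  have hXm : Measurable X := Xmeas n A hA
  have hms : ∀ c : ℕ, MeasurableSet {ω | X ω = c} := fun c => hXm (measurableSet_eq)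
  have hpt : ∀ ω, g (X ω) = ∑ c ∈ range (n+1), Set.indicator {ω | X ω = c} (fun _ => g c) ω := by
    intro ω
    have hXle : X ω ∈ range (n+1) := by
      simp only [mem_range, Nat.lt_succ_iff, hX]
      exact (Finset.card_filter_le _ _).trans (by simp)
    simp only [Set.indicator_apply, Set.mem_setOf_eq]
    rw [Finset.sum_ite_eq (range (n+1)) (X ω) g, if_pos hXle]
  calc ∫ ω, g (X ω) ∂P
      = ∫ ω, ∑ c ∈ range (n+1), Set.indicator {ω | X ω = c} (fun _ => g c) ω ∂P := by
        exact integral_congr_ae (Filter.Eventually.of_forall hpt)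
    _ = ∑ c ∈ range (n+1), ∫ ω, Set.indicator {ω | X ω = c} (fun _ => g c) ω ∂P := by
        apply integral_finset_sum
        intro c _
        exact (integrable_const (g c)).indicator (hms c)
    _ = ∑ c ∈ range (n+1), g c * (P {ω | X ω = c}).toReal := by
        apply Finset.sum_congr rfl
        intro c _
        rw [integral_indicator_const (g c) (hms c)]
        simp [mul_comm, measureReal_def]

end

section
variable {Ω : Type*} [MeasurableSpace Ω] (P : Measure Ω) [IsProbabilityMeasure P]
  (n : ℕ) (A : Fin n → Set Ω)

lemma prob_ge (hA : ∀ i, MeasurableSet (A i)) (r : ℕ) :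
    (P {ω | r ≤ (Finset.univ.filter (fun l => ω ∈ A l)).card}).toReal
      = ∑ c ∈ range (n+1), (if r ≤ c then (1:ℝ) else 0)
          * (P {ω | (Finset.univ.filter (fun l => ω ∈ A l)).card = c}).toReal := by
  rw [← integral_comp P n A hA (fun c => if r ≤ c then (1:ℝ) else 0)]
  have hms : MeasurableSet {ω | r ≤ (Finset.univ.filter (fun l => ω ∈ A l)).card} :=
    Xmeas n A hA (show MeasurableSet {c : ℕ | r ≤ c} from trivial)
  rw [← measureReal_def, ← integral_indicator_one hms]
  apply integral_congr_ae
  apply Filter.Eventually.of_forall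
  intro ω
  simp [Set.indicator_apply]

lemma Sj_eq (hA : ∀ i, MeasurableSet (A i)) (j : ℕ) :
    ∑ T ∈ Finset.powersetCard j (Finset.univ : Finset (Fin n)), (P (⋂ l ∈ T, A l)).toReal
      = ∑ c ∈ range (n+1), ((c.choose j : ℝ))
          * (P {ω | (Finset.univ.filter (fun l => ω ∈ A l)).card = c}).toReal := by
  have hB : ∀ T : Finset (Fin n), MeasurableSet (⋂ l ∈ T, A l) :=
    fun T => MeasurableSet.biInter T.countable_toSet (fun l _ => hA l)
  set F : Finset (Fin n) → Ω → ℝ := fun T => Set.indicator (⋂ l ∈ T, A l) 1 with hF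
  have h1 : ∀ T ∈ Finset.powersetCard j (Finset.univ : Finset (Fin n)),
      (P (⋂ l ∈ T, A l)).toReal = ∫ ω, F T ω ∂P := by
    intro T _
    rw [hF, integral_indicator_one (hB T), measureReal_def]
  have h2 := (integral_finset_sum (μ := P) (f := F) (Finset.powersetCard j (Finset.univ : Finset (Fin n)))
    (fun T _ => ((integrable_const (1:ℝ)).indicator (hB T) : Integrable (F T) P))).symm
  rw [Finset.sum_congr rfl h1, h2, ← integral_comp P n A hA (fun c => (c.choose j : ℝ))]
  apply integral_congr_ae
  apply Filter.Eventually.of_forall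
  intro ω
  show ∑ T ∈ Finset.powersetCard j (Finset.univ : Finset (Fin n)), F T ω
      = (((Finset.univ.filter (fun l => ω ∈ A l)).card.choose j : ℕ) : ℝ)
  have hpt : ∀ T : Finset (Fin n), F T ω
      = if T ⊆ Finset.univ.filter (fun l => ω ∈ A l) then (1:ℝ) else 0 := by
    intro T
    simp only [hF]
    rw [Set.indicator_apply]
    congr 1
    simp only [Set.mem_iInter, eq_iff_iff]
    constructor
    · intro h l hl; simp only [mem_filter, mem_univ, true_and]; exact h l hl
    · intro h l hl; have := h hl; simp only [mem_filter] at this; exact this.2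
  rw [Finset.sum_congr rfl (fun T _ => hpt T), Finset.sum_boole]
  have : Finset.filter (fun T => T ⊆ Finset.univ.filter (fun l => ω ∈ A l))
      (Finset.powersetCard j (Finset.univ : Finset (Fin n)))
      = Finset.powersetCard j (Finset.univ.filter (fun l => ω ∈ A l)) := by
    ext T
    simp only [mem_filter, Finset.mem_powersetCard]
    constructor
    · rintro ⟨⟨_, hc⟩, hs⟩; exact ⟨hs, hc⟩
    · rintro ⟨hs, hc⟩; exact ⟨⟨Finset.subset_univ T, hc⟩, hs⟩
  rw [this, Finset.card_powersetCard]

end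


lemma swap_helper {α β : Type*} (s : Finset α) (t : Finset β) (g : β → α → ℝ) (μ : α → ℝ) :
    ∑ c ∈ s, (∑ j ∈ t, g j c) * μ c = ∑ j ∈ t, ∑ c ∈ s, g j c * μ c := by
  simp only [Finset.sum_mul]
  exact Finset.sum_comm

/-- for `1 ≤ r ≤ k`,
`P(X ≥ r) = ∑_{j=r}^{k} (-1)^(r+j) C(j-1,r-1) S_j
            + (-1)^(r+k+1) ∑_{i=1}^{r} C(k-i, r-i) E[C(X-i, k-i+1)]`. -/
theorem prob_at_least_eq_truncation_plus_error
    {Ω : Type*} [MeasurableSpace Ω] (P : Measure Ω) [IsProbabilityMeasure P]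
    (n : ℕ) (A : Fin n → Set Ω) (hA : ∀ i, MeasurableSet (A i))
    (k r : ℕ) (hr1 : 1 ≤ r) (hrk : r ≤ k) :
    (P {ω | r ≤ (Finset.univ.filter (fun l => ω ∈ A l)).card}).toReal
      = (∑ j ∈ Finset.Icc r k,
          (-1 : ℝ) ^ (r + j) * ((j - 1).choose (r - 1)) *
            ∑ T ∈ Finset.powersetCard j (Finset.univ : Finset (Fin n)),
              (P (⋂ l ∈ T, A l)).toReal)
        + (-1 : ℝ) ^ (r + k + 1) *
            ∑ i ∈ Finset.Icc 1 r,
              ((k - i).choose (r - i) : ℝ) *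
                ∫ ω, ((intChoose
                    (((Finset.univ.filter (fun l => ω ∈ A l)).card : ℤ) - i)
                    ((k : ℤ) - i + 1) : ℤ) : ℝ) ∂P := by
  set μ : ℕ → ℝ :=
    fun c => (P {ω | (Finset.univ.filter (fun l => ω ∈ A l)).card = c}).toReal with hμ
  have hkey : ∀ c : ℕ, (if r ≤ c then (1:ℝ) else 0)
      = (∑ j ∈ Finset.Icc r k,
            (-1:ℝ)^(r+j) * ((j-1).choose (r-1) : ℝ) * (c.choose j : ℝ))
        + (-1:ℝ)^(r+k+1) * ∑ i ∈ Finset.Icc 1 r,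
            ((k-i).choose (r-i) : ℝ) * ((intChoose ((c:ℤ) - i) ((k:ℤ) - i + 1) : ℤ) : ℝ) := by
    intro c
    have h := key c r hr1 k hrk
    have h2 := congrArg (fun z : ℤ => (z : ℝ)) h
    simp only [apply_ite (fun z : ℤ => (z : ℝ))] at h2
    push_cast at h2
    convert h2 using 2
  have hI : ∀ i : ℕ,
      (∫ ω, ((intChoose (((Finset.univ.filter (fun l => ω ∈ A l)).card : ℤ) - i)
          ((k:ℤ) - i + 1) : ℤ) : ℝ) ∂P)
        = ∑ c ∈ range (n+1), ((intChoose ((c:ℤ) - i) ((k:ℤ) - i + 1) : ℤ) : ℝ) * μ c :=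
    fun i => integral_comp P n A hA
      (fun c => ((intChoose ((c:ℤ) - i) ((k:ℤ) - i + 1) : ℤ) : ℝ))
  have hS : ∀ j : ℕ,
      (∑ T ∈ Finset.powersetCard j (Finset.univ : Finset (Fin n)),
          (P (⋂ l ∈ T, A l)).toReal)
        = ∑ c ∈ range (n+1), (c.choose j : ℝ) * μ c :=
    fun j => Sj_eq P n A hA j
  rw [prob_ge P n A hA r,
    Finset.sum_congr rfl (fun c _ => by rw [hkey c]),
    Finset.sum_congr rfl (fun j (_ : j ∈ Finset.Icc r k) => by rw [hS j]),
    Finset.sum_congr rfl (fun i (_ : i ∈ Finset.Icc 1 r) => by rw [hI i])]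
  rw [Finset.sum_congr rfl (fun c _ => by rw [add_mul, mul_assoc]),
    Finset.sum_add_distrib, ← Finset.mul_sum, swap_helper]
  congr 1
  · exact Finset.sum_congr rfl fun j _ => by
      rw [Finset.mul_sum]
      exact Finset.sum_congr rfl fun c _ => by ring
  · congr 1
    rw [swap_helper]
    exact Finset.sum_congr rfl fun i _ => by
      rw [Finset.mul_sum]
      exact Finset.sum_congr rfl fun c _ => by ring
end

section
/- For all integers n, k, r with 1 ≤ r ≤ k and n ≥ k, Σ_{i=1}^{r} C(k-i, r-i) C(n-i, k+1-i) = (-1)^{k+r} ( Σ_{j=0}^{k-r} (-1)^j C(r+j-1, r-1) C(n, r+j) − 1 ). In particular, up to sign, the coefficient Σ_{i=1}^{r} C(k-i, r-i) C(k+1, i)/C(n, i) appearing in the improved Bonferroni bound coincides with Galambos–Mărgăritescu's coefficient (Σ_{j=0}^{k-r} (-1)^j C(r+j-1, r-1) C(n, r+j) − 1)/C(n, k+1). -/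
open Finset

private lemma alt_sum_aux (n : ℕ) : ∀ m : ℕ,
    ∑ j ∈ range (m + 1), (-1 : ℤ) ^ j * ((n + 1).choose j : ℤ)
      = (-1 : ℤ) ^ m * (n.choose m : ℤ)
  | 0 => by simp
  | m + 1 => by
    rw [sum_range_succ, alt_sum_aux n m, Nat.choose_succ_succ (n := n) (k := m)]
    push_cast
    ring

private lemma telescope_aux (u v : ℕ → ℤ) (h0 : v 0 = 0) (hs : ∀ j, v (j + 1) = u j) :
    ∀ d : ℕ, ∑ j ∈ range (d + 1), (-1 : ℤ) ^ j * (u j + v j) = (-1 : ℤ) ^ d * u d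
  | 0 => by simp [h0]
  | d + 1 => by
    rw [sum_range_succ, telescope_aux u v h0 hs d, hs d]
    ring

private lemma key_aux (r n0 d : ℕ) :
    (∑ j ∈ range (d + 1), (-1 : ℤ) ^ j * ((r + j + 1).choose (r + 1) : ℤ) * (((n0 + 1).choose (r + j + 2) : ℤ)))
      - (∑ j ∈ range (d + 1), (-1 : ℤ) ^ j * ((r + j).choose r : ℤ) * ((n0.choose (r + j + 1) : ℤ)))
      = (-1 : ℤ) ^ d * ((r + d + 1).choose (r + 1) : ℤ) * (n0.choose (r + d + 2) : ℤ) := by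
  have htel := telescope_aux
      (fun j => ((r + j + 1).choose (r + 1) : ℤ) * (n0.choose (r + j + 2) : ℤ))
      (fun j => ((r + j).choose (r + 1) : ℤ) * (n0.choose (r + j + 1) : ℤ))
      (by simp [Nat.choose_succ_self])
      (fun j => by
        beta_reduce
        rw [show r + (j + 1) = r + j + 1 by omega, show r + j + 1 + 1 = r + j + 2 by omega])
      d
  beta_reduce at htel
  rw [← sum_sub_distrib, ← mul_assoc] at *
  rw [← htel]
  apply sum_congr rfl
  intro j _
  have p1 : ((r + j + 1).choose (r + 1) : ℤ) = (r + j).choose r + (r + j).choose (r + 1) := by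
    rw [Nat.choose_succ_succ]; push_cast; ring
  have p2 : (((n0 + 1).choose (r + j + 2)) : ℤ) = n0.choose (r + j + 1) + n0.choose (r + j + 2) := by
    rw [show r + j + 2 = (r + j + 1) + 1 from rfl, Nat.choose_succ_succ]; push_cast; ring
  rw [p1, p2]; ring

private lemma cc {a b a' b' : ℕ} (ha : a = a') (hb : b = b') :
    ((a.choose b : ℕ) : ℤ) = a'.choose b' := by subst ha; subst hb; rfl

private lemma main_aux : ∀ r : ℕ, ∀ n k : ℕ, r + 1 ≤ k → k ≤ n →
    ∑ i ∈ Finset.Icc 1 (r + 1), ((k - i).choose (r + 1 - i) : ℤ) * ((n - i).choose (k + 1 - i) : ℤ)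
      = (-1 : ℤ) ^ (k + (r + 1)) *
          ((∑ j ∈ Finset.range (k - (r + 1) + 1),
              (-1 : ℤ) ^ j * ((r + 1 + j - 1).choose (r + 1 - 1) : ℤ) * (n.choose (r + 1 + j) : ℤ)) - 1)
  | 0, n, k, hk, hn => by
    obtain ⟨n0, rfl⟩ : ∃ n0, n = n0 + 1 := ⟨n - 1, by omega⟩
    rw [show (0:ℕ) + 1 = 1 from rfl, Finset.Icc_self, Finset.sum_singleton,
        show k - 1 + 1 = k by omega]
    have h2 : ∑ j ∈ range k, (-1 : ℤ) ^ j * ((1 + j - 1).choose (1 - 1) : ℤ) * ((n0 + 1).choose (1 + j) : ℤ)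
        = 1 - (-1 : ℤ) ^ k * (n0.choose k : ℤ) := by
      have h1 := alt_sum_aux n0 k
      rw [Finset.sum_range_succ'] at h1
      have h3 : ∑ j ∈ range k, (-1 : ℤ) ^ j * ((1 + j - 1).choose (1 - 1) : ℤ) * ((n0 + 1).choose (1 + j) : ℤ)
          = - ∑ j ∈ range k, (-1 : ℤ) ^ (j + 1) * ((n0 + 1).choose (j + 1) : ℤ) := by
        rw [← Finset.sum_neg_distrib]
        apply sum_congr rfl
        intro j _
        rw [cc (show 1 + j - 1 = j by omega) (show 1 - 1 = 0 from rfl),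
            cc (rfl : n0 + 1 = n0 + 1) (show 1 + j = j + 1 by omega), Nat.choose_zero_right]
        push_cast
        ring
      rw [h3]
      simp only [pow_zero, one_mul, Nat.choose_zero_right, Nat.cast_one] at h1
      linarith
    rw [h2]
    rw [cc (show n0 + 1 - 1 = n0 by omega) (show k + 1 - 1 = k by omega),
        cc (show k - 1 = k - 1 from rfl) (show 1 - 1 = 0 from rfl), Nat.choose_zero_right]
    have hsq : (-1 : ℤ) ^ k * (-1) ^ k = 1 := by
      rw [← pow_add]; exact Even.neg_one_pow ⟨k, rfl⟩
    rw [pow_add]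
    linear_combination (-(n0.choose k : ℤ)) * hsq
  | r + 1, n, k, hk, hn => by
    obtain ⟨n0, rfl⟩ : ∃ n0, n = n0 + 1 := ⟨n - 1, by omega⟩
    obtain ⟨d, rfl⟩ : ∃ d, k = r + 1 + d + 1 := ⟨k - (r + 2), by omega⟩
    have IH := main_aux r n0 (r + 1 + d) (by omega) (by omega)
    -- normalize IH's range and sum
    rw [show r + 1 + d - (r + 1) + 1 = d + 1 by omega] at IH
    have hBI : ∑ j ∈ range (d + 1),
        (-1 : ℤ) ^ j * ((r + 1 + j - 1).choose (r + 1 - 1) : ℤ) * (n0.choose (r + 1 + j) : ℤ)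
        = ∑ j ∈ range (d + 1), (-1 : ℤ) ^ j * ((r + j).choose r : ℤ) * (n0.choose (r + j + 1) : ℤ) := by
      apply sum_congr rfl; intro j _
      rw [cc (show r + 1 + j - 1 = r + j by omega) (show r + 1 - 1 = r by omega),
          cc (rfl : n0 = n0) (show r + 1 + j = r + j + 1 by omega)]
    rw [hBI] at IH
    -- LHS decomposition
    have hL : ∑ i ∈ Finset.Icc 1 (r + 1 + 1),
        ((r + 1 + d + 1 - i).choose (r + 1 + 1 - i) : ℤ) * ((n0 + 1 - i).choose (r + 1 + d + 1 + 1 - i) : ℤ)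
        = ((r + 1 + d).choose (r + 1) : ℤ) * ((n0).choose (r + 1 + d + 1) : ℤ)
          + ∑ i ∈ Finset.Icc 1 (r + 1),
              ((r + 1 + d - i).choose (r + 1 - i) : ℤ) * ((n0 - i).choose (r + 1 + d + 1 - i) : ℤ) := by
      rw [← Finset.Ico_add_one_right_eq_Icc, Finset.sum_Ico_eq_sum_range,
          ← Finset.Ico_add_one_right_eq_Icc (a := 1) (b := r + 1), Finset.sum_Ico_eq_sum_range,
          show r + 1 + 1 + 1 - 1 = r + 1 + 1 from rfl, show r + 1 + 1 - 1 = r + 1 from rfl,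
          Finset.sum_range_succ', add_comm]
      congr 1
      · apply sum_congr rfl; intro i _
        rw [cc (show r + 1 + d + 1 - (1 + (i + 1)) = r + 1 + d - (1 + i) by omega)
              (show r + 1 + 1 - (1 + (i + 1)) = r + 1 - (1 + i) by omega),
            cc (show n0 + 1 - (1 + (i + 1)) = n0 - (1 + i) by omega)
              (show r + 1 + d + 1 + 1 - (1 + (i + 1)) = r + 1 + d + 1 - (1 + i) by omega)]
    rw [hL, IH]
    -- normalize goal's sum
    rw [show r + 1 + d + 1 - (r + 1 + 1) + 1 = d + 1 by omega]
    have hA : ∑ j ∈ range (d + 1),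
        (-1 : ℤ) ^ j * ((r + 1 + 1 + j - 1).choose (r + 1 + 1 - 1) : ℤ) * ((n0 + 1).choose (r + 1 + 1 + j) : ℤ)
        = ∑ j ∈ range (d + 1), (-1 : ℤ) ^ j * ((r + j + 1).choose (r + 1) : ℤ) * ((n0 + 1).choose (r + j + 2) : ℤ) := by
      apply sum_congr rfl; intro j _
      rw [cc (show r + 1 + 1 + j - 1 = r + j + 1 by omega) (show r + 1 + 1 - 1 = r + 1 by omega),
          cc (rfl : n0 + 1 = n0 + 1) (show r + 1 + 1 + j = r + j + 2 by omega)]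
    rw [hA]
    have key := key_aux r n0 d
    have h1 : ((r + 1 + d).choose (r + 1) : ℤ) = (r + d + 1).choose (r + 1) := cc (by omega) rfl
    have h2 : ((n0).choose (r + 1 + d + 1) : ℤ) = n0.choose (r + d + 2) := cc rfl (by omega)
    rw [h1, h2]
    have hs1 : (-1 : ℤ) ^ (r + 1 + d + (r + 1)) = (-1) ^ d := by
      rw [show r + 1 + d + (r + 1) = d + 2 * (r + 1) by ring, pow_add, pow_mul]
      norm_num
    have hs2 : (-1 : ℤ) ^ (r + 1 + d + 1 + (r + 1 + 1)) = (-1) ^ d := by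
      rw [show r + 1 + d + 1 + (r + 1 + 1) = d + 2 * (r + 2) by ring, pow_add, pow_mul]
      norm_num
    rw [hs1, hs2]
    have hsq : (-1 : ℤ) ^ d * (-1) ^ d = 1 := by
      rw [← pow_add]
      exact Even.neg_one_pow ⟨d, rfl⟩
    linear_combination (-((-1 : ℤ) ^ d)) * key
      - (((r + d + 1).choose (r + 1) : ℤ) * (n0.choose (r + d + 2) : ℤ)) * hsq


/-- for `1 ≤ r ≤ k ≤ n`,
`∑_{i=1}^{r} C(k-i, r-i) C(n-i, k+1-i)
   = (-1)^{k+r} (∑_{j=0}^{k-r} (-1)^j C(r+j-1, r-1) C(n, r+j) − 1)`,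
which shows that the coefficient in the improved Bonferroni bound coincides, up
to dividing by `C(n, k+1)`, with Galambos–Mărgăritescu's coefficient. -/
theorem coefficient_identity (n k r : ℕ) (hr1 : 1 ≤ r) (hrk : r ≤ k) (hkn : k ≤ n) :
    ∑ i ∈ Finset.Icc 1 r, ((k - i).choose (r - i) : ℤ) * ((n - i).choose (k + 1 - i) : ℤ)
      = (-1 : ℤ) ^ (k + r) *
          ((∑ j ∈ Finset.range (k - r + 1),
              (-1 : ℤ) ^ j * ((r + j - 1).choose (r - 1) : ℤ) * (n.choose (r + j) : ℤ)) - 1) := by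
  obtain ⟨r0, rfl⟩ : ∃ r0, r = r0 + 1 := ⟨r - 1, by omega⟩
  exact main_aux r0 n k hrk hkn
end
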